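/- Let h_1, …, h_n ∈ ℝᵈ be unit vectors (‖h_i‖ = 1 for all i), and set ρ_{ij} = ⟨h_i, h_j⟩. Then the n × n real matrix with entries (√(1 - ρ_{ij}²) + ρ_{ij} · (π - arccos ρ_{ij}))/(2π) is positive semidefinite. -/

import Mathlib

/-!
With `f ρ = √(1 - ρ²) + ρ (π - arccos ρ)` we have `f' = π - arccos` and `f'' = (1 - ρ²)^(-1/2)`.
Integrating the binomial series of `f''` twice shows that `f` is a power series with nonnegative
coefficients, converging on `[-1, 1]` (at the endpoints by Abel's limit theorem). By the Schur
product theorem every entrywise power of the Gram matrix `(ρᵢⱼ)` is positive semidefinite, hence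
so is the nonnegative combination `(f ρᵢⱼ)`.
-/

open Real Set Filter Topology

noncomputable def antiderivCoeff (C : ℝ) (b : ℕ → ℝ) : ℕ → ℝ
  | 0 => C
  | n + 1 => b n / (n + 1)

theorem antiderivCoeff_nonneg {C : ℝ} {b : ℕ → ℝ} (hC : 0 ≤ C) (hb : 0 ≤ b) :
    0 ≤ antiderivCoeff C b
  | 0 => hC
  | n + 1 => div_nonneg (hb n) (by positivity)

theorem hasDerivAt_tsum_div_succ_mul_pow_succ {b : ℕ → ℝ} (hb : 0 ≤ b)
    (hsum : ∀ x ∈ Ioo (-1 : ℝ) 1, Summable fun n => b n * x ^ n) {y : ℝ}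
    (hy : y ∈ Ioo (-1) 1) :
    (Summable fun n => b n / (n + 1) * y ^ (n + 1)) ∧
      HasDerivAt (fun z => ∑' n, b n / (n + 1) * z ^ (n + 1)) (∑' n, b n * y ^ n) y := by
  have hg : ∀ n z, HasDerivAt (fun z => b n / (n + 1) * z ^ (n + 1)) (b n * z ^ n) z :=
    fun n z => by
      refine ((hasDerivAt_pow (n + 1) z).const_mul (b n / (n + 1))).congr_deriv ?_
      rw [Nat.add_sub_cancel]
      push_cast
      field_simp
  obtain ⟨r, hyr, hr⟩ : ∃ r, |y| < r ∧ r < 1 := exists_between (abs_lt.mpr hy)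
  have hy_mem : y ∈ Ioo (-r) r := abs_lt.mp hyr
  have h0 : (0 : ℝ) ∈ Ioo (-r) r := ⟨by linarith [abs_nonneg y], by linarith [abs_nonneg y]⟩
  have hu : Summable fun n => b n * r ^ n := hsum r ⟨by linarith [abs_nonneg y], hr⟩
  have hbound : ∀ n, ∀ z ∈ Ioo (-r) r, ‖b n * z ^ n‖ ≤ b n * r ^ n := fun n z hz => by
    rw [norm_mul, norm_pow, Real.norm_of_nonneg (hb n), Real.norm_eq_abs]
    have := hb n
    gcongr
    exact (abs_lt.mpr hz).le
  have hg0 : Summable fun n => b n / (n + 1) * (0 : ℝ) ^ (n + 1) := by simp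
  exact ⟨summable_of_summable_hasDerivAt_of_isPreconnected (t := Ioo (-r) r)
      (g := fun n z => b n / (n + 1) * z ^ (n + 1)) (g' := fun n z => b n * z ^ n)
      hu isOpen_Ioo isPreconnected_Ioo (fun n z _ => hg n z) hbound h0 hg0 hy_mem,
    hasDerivAt_tsum_of_isPreconnected hu isOpen_Ioo isPreconnected_Ioo
      (fun n z _ => hg n z) hbound h0 hg0 hy_mem⟩

theorem hasSum_antiderivCoeff {b : ℕ → ℝ} (hb : 0 ≤ b) {F F' : ℝ → ℝ}
    (hF : ∀ x ∈ Ioo (-1) 1, HasDerivAt F (F' x) x)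
    (hF' : ∀ x ∈ Ioo (-1) 1, HasSum (fun n => b n * x ^ n) (F' x)) {x : ℝ}
    (hx : x ∈ Ioo (-1) 1) :
    HasSum (fun n => antiderivCoeff (F 0) b n * x ^ n) (F x) := by
  have hseries := fun y (hy : y ∈ Ioo (-1 : ℝ) 1) =>
    hasDerivAt_tsum_div_succ_mul_pow_succ hb (fun z hz => (hF' z hz).summable) hy
  have hderiv : ∀ y ∈ Ioo (-1 : ℝ) 1,
      HasDerivAt (fun z => ∑' n, b n / (n + 1) * z ^ (n + 1) - F z) 0 y := fun y hy => by
    simpa [(hF' y hy).tsum_eq] using (hseries y hy).2.fun_sub (hF y hy)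
  have hconst := isOpen_Ioo.is_const_of_deriv_eq_zero isPreconnected_Ioo
    (fun y hy => (hderiv y hy).differentiableAt.differentiableWithinAt)
    (fun y hy => (hderiv y hy).deriv) hx (show (0 : ℝ) ∈ Ioo (-1) 1 by norm_num)
  simp only [ne_eq, Nat.add_eq_zero_iff, one_ne_zero, and_false, not_false_eq_true, zero_pow,
    mul_zero, tsum_zero, zero_sub] at hconst
  refine (hasSum_nat_add_iff' 1).mp ?_
  simpa [antiderivCoeff, show ∑' n, b n / (n + 1) * x ^ (n + 1) = F x - F 0 by linarith] using
    (hseries x hx).1.hasSum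

theorem hasSum_of_nonneg_of_continuousOn {c : ℕ → ℝ} (hc : 0 ≤ c) {G : ℝ → ℝ}
    (hG : ContinuousOn G (Icc (-1) 1))
    (hser : ∀ x ∈ Ioo (-1) 1, HasSum (fun n => c n * x ^ n) (G x)) {x : ℝ}
    (hx : x ∈ Icc (-1) 1) :
    HasSum (fun n => c n * x ^ n) (G x) := by
  have hnear : ∀ᶠ t in 𝓝[<] (1 : ℝ), t ∈ Ioo 0 1 := Ioo_mem_nhdsLT one_pos
  have hmul_mem : ∀ y ∈ Icc (-1 : ℝ) 1, ∀ t ∈ Ioo (0 : ℝ) 1, y * t ∈ Ioo (-1) 1 := by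
    intro y hy t ht
    have : |y * t| < 1 := by
      rw [abs_mul, abs_of_pos ht.1]
      calc |y| * t ≤ 1 * t := by gcongr; exacts [ht.1.le, abs_le.mpr hy]
        _ < 1 := by linarith [ht.2]
    exact abs_lt.mp this
  have hlim : ∀ y ∈ Icc (-1 : ℝ) 1, Tendsto (fun t => G (y * t)) (𝓝[<] 1) (𝓝 (G y)) := by
    intro y hy
    refine (hG y hy).tendsto.comp
      (tendsto_nhdsWithin_of_tendsto_nhds_of_eventually_within _ ?_ ?_)
    · simpa using ((continuous_const_mul y).tendsto 1).mono_left nhdsWithin_le_nhds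
    · filter_upwards [hnear] with t ht using Ioo_subset_Icc_self (hmul_mem y hy t ht)
  -- the partial sums of `c` are limits of those of `c n * t ^ n`, hence bounded by `G 1`
  have hc_summable : Summable c := by
    refine summable_of_sum_range_le hc fun N => le_of_tendsto_of_tendsto
      (f := fun t => ∑ n ∈ Finset.range N, c n * t ^ n) ?_
      (by simpa using hlim 1 ⟨by norm_num, le_rfl⟩) ?_
    · have : Continuous fun t : ℝ => ∑ n ∈ Finset.range N, c n * t ^ n := by fun_prop
      simpa using (this.tendsto 1).mono_left nhdsWithin_le_nhds
    · filter_upwards [hnear] with t ht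
      have := hmul_mem 1 ⟨by norm_num, le_rfl⟩ t ht
      rw [one_mul] at this
      exact sum_le_hasSum _ (fun n _ => mul_nonneg (hc n) (pow_nonneg ht.1.le n)) (hser t this)
  have hsummable : Summable fun n => c n * x ^ n := by
    refine hc_summable.of_norm_bounded fun n => ?_
    rw [norm_mul, norm_pow, Real.norm_of_nonneg (hc n), Real.norm_eq_abs]
    exact mul_le_of_le_one_right (hc n) (pow_le_one₀ (abs_nonneg x) (abs_le.mpr hx))
  have habel := Real.tendsto_tsum_powerSeries_nhdsWithin_lt hsummable.hasSum.tendsto_sum_nat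
  have heq : (fun t => ∑' n, c n * x ^ n * t ^ n) =ᶠ[𝓝[<] 1] fun t => G (x * t) := by
    filter_upwards [hnear] with t ht
    simpa only [mul_pow, mul_assoc] using (hser _ (hmul_mem x hx t ht)).tsum_eq
  convert hsummable.hasSum
  exact tendsto_nhds_unique (hlim x hx) (habel.congr' heq)

theorem Ring.multichoose_pos {K : Type*} [Field K] [LinearOrder K] [IsStrictOrderedRing K]
    [BinomialRing K] {r : K} (hr : 0 < r) (n : ℕ) : 0 < Ring.multichoose r n := by
  have h := factorial_nsmul_multichoose_eq_ascPochhammer r n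
  rw [Polynomial.ascPochhammer_smeval_eq_eval, nsmul_eq_mul] at h
  exact pos_of_mul_pos_right (h ▸ ascPochhammer_pos n r hr) (by positivity)

noncomputable def invSqrtCoeff : ℕ → ℝ :=
  Function.extend (fun m => 2 * m) (Ring.multichoose (1 / 2 : ℝ)) 0

theorem invSqrtCoeff_nonneg : 0 ≤ invSqrtCoeff := by
  intro n
  by_cases h : ∃ m, 2 * m = n
  · obtain ⟨m, rfl⟩ := h
    rw [invSqrtCoeff, (mul_right_injective₀ two_ne_zero).extend_apply]
    exact (Ring.multichoose_pos (by norm_num) m).le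
  · rw [invSqrtCoeff, Function.extend_apply' _ _ _ h]

theorem hasSum_invSqrtCoeff {x : ℝ} (hx : x ∈ Ioo (-1) 1) :
    HasSum (fun n => invSqrtCoeff n * x ^ n) (1 / √(1 - x ^ 2)) := by
  have hx2 : x ^ 2 ∈ Metric.eball (0 : ℝ) 1 := by
    have : ‖x ^ 2‖₊ < 1 := by
      rw [← NNReal.coe_lt_coe, coe_nnnorm, norm_pow, Real.norm_eq_abs, NNReal.coe_one]
      exact pow_lt_one₀ (abs_nonneg x) (abs_lt.mpr hx) two_ne_zero
    exact mem_eball_zero_iff.mpr (by rw [enorm_eq_nnnorm]; exact_mod_cast this)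
  have hbin := (one_div_one_sub_rpow_hasFPowerSeriesOnBall_zero (1 / 2)).hasSum hx2
  simp only [FormalMultilinearSeries.ofScalars_apply_eq, zero_add, smul_eq_mul] at hbin
  rw [sqrt_eq_rpow]
  rw [← (mul_right_injective₀ two_ne_zero).hasSum_iff]
  · refine hbin.congr_fun fun m => ?_
    rw [Function.comp_apply, invSqrtCoeff, (mul_right_injective₀ two_ne_zero).extend_apply,
      Ring.multichoose_eq, pow_mul]
  · intro n hn
    rw [invSqrtCoeff, Function.extend_apply' _ _ _ hn, Pi.zero_apply, zero_mul]

theorem hasDerivAt_pi_sub_arccos {x : ℝ} (hx : x ∈ Ioo (-1) 1) :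
    HasDerivAt (fun y => π - arccos y) (1 / √(1 - x ^ 2)) x := by
  simpa using (hasDerivAt_arccos hx.1.ne' hx.2.ne).const_sub π

theorem hasDerivAt_sqrt_one_sub_sq_add_mul_pi_sub_arccos {x : ℝ} (hx : x ∈ Ioo (-1) 1) :
    HasDerivAt (fun y => √(1 - y ^ 2) + y * (π - arccos y)) (π - arccos x) x := by
  have hpos : 0 < 1 - x ^ 2 := by nlinarith [hx.1, hx.2]
  have hsqrt : HasDerivAt (fun y => √(1 - y ^ 2)) (-(2 * x) / (2 * √(1 - x ^ 2))) x := by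
    simpa using ((hasDerivAt_pow 2 x).const_sub 1).sqrt hpos.ne'
  refine (hsqrt.add ((hasDerivAt_id' x).mul (hasDerivAt_pi_sub_arccos hx))).congr_deriv ?_
  have : √(1 - x ^ 2) ≠ 0 := (sqrt_pos.mpr hpos).ne'
  field_simp
  ring

theorem exists_nonneg_hasSum_sqrt_one_sub_sq_add_mul_pi_sub_arccos :
    ∃ c : ℕ → ℝ, 0 ≤ c ∧ ∀ x ∈ Icc (-1 : ℝ) 1,
      HasSum (fun n => c n * x ^ n) (√(1 - x ^ 2) + x * (π - arccos x)) := by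
  have hb : 0 ≤ antiderivCoeff (π / 2) invSqrtCoeff :=
    antiderivCoeff_nonneg (by positivity) invSqrtCoeff_nonneg
  have hF' : ∀ x ∈ Ioo (-1 : ℝ) 1,
      HasSum (fun n => antiderivCoeff (π / 2) invSqrtCoeff n * x ^ n) (π - arccos x) := by
    intro x hx
    have := hasSum_antiderivCoeff invSqrtCoeff_nonneg (fun y hy => hasDerivAt_pi_sub_arccos hy)
      (fun y hy => hasSum_invSqrtCoeff hy) hx
    simpa [arccos_zero, sub_half] using this
  have hF : ∀ x ∈ Ioo (-1 : ℝ) 1,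
      HasSum (fun n => antiderivCoeff 1 (antiderivCoeff (π / 2) invSqrtCoeff) n * x ^ n)
        (√(1 - x ^ 2) + x * (π - arccos x)) := by
    intro x hx
    have := hasSum_antiderivCoeff hb
      (fun y hy => hasDerivAt_sqrt_one_sub_sq_add_mul_pi_sub_arccos hy) hF' hx
    simpa using this
  have hcont : ContinuousOn (fun x => √(1 - x ^ 2) + x * (π - arccos x)) (Icc (-1) 1) :=
    (by fun_prop : Continuous fun x => √(1 - x ^ 2) + x * (π - arccos x)).continuousOn
  exact ⟨_, antiderivCoeff_nonneg zero_le_one hb,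
    fun x hx => hasSum_of_nonneg_of_continuousOn (antiderivCoeff_nonneg zero_le_one hb) hcont
      hF hx⟩

namespace Matrix

open scoped ComplexOrder

variable {ι 𝕜 : Type*} [Fintype ι] [RCLike 𝕜]

theorem PosSemidef.map_pow {A : Matrix ι ι 𝕜} (hA : A.PosSemidef) (n : ℕ) :
    (A.map (· ^ n)).PosSemidef := by
  induction n with
  | zero =>
    have : A.map (· ^ 0) = vecMulVec 1 (star 1) := by ext; simp [vecMulVec]
    rw [this]
    exact posSemidef_vecMulVec_self_star 1
  | succ n ih =>
    have : A.map (· ^ (n + 1)) = A.map (· ^ n) ⊙ A := by ext; simp [pow_succ]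
    rw [this]
    exact ih.hadamard hA

theorem posSemidef_of_hasSum {M : ℕ → Matrix ι ι 𝕜} {B : Matrix ι ι 𝕜}
    (hM : ∀ n, (M n).PosSemidef) (hB : ∀ i j, HasSum (fun n => M n i j) (B i j)) :
    B.PosSemidef := by
  refine .of_dotProduct_mulVec_nonneg ?_ fun x => ?_
  · ext i j
    refine (hB j i).star.unique ?_
    simpa only [(hM _).isHermitian.apply] using hB i j
  · have hsum : HasSum (fun n => star x ⬝ᵥ M n *ᵥ x) (star x ⬝ᵥ B *ᵥ x) := by
      simp only [dotProduct, mulVec, Finset.mul_sum]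
      exact hasSum_sum fun i _ => hasSum_sum fun j _ => ((hB i j).mul_right (x j)).mul_left _
    exact hsum.nonneg fun n => (hM n).dotProduct_mulVec_nonneg x

theorem PosSemidef.map_of_hasSum {A : Matrix ι ι 𝕜} (hA : A.PosSemidef) {c : ℕ → ℝ} (hc : 0 ≤ c)
    {f : 𝕜 → 𝕜} (hf : ∀ i j, HasSum (fun n => c n • A i j ^ n) (f (A i j))) :
    (A.map f).PosSemidef :=
  posSemidef_of_hasSum (M := fun n => c n • A.map (· ^ n))
    (fun n => (hA.map_pow n).smul (hc n)) hf

end Matrix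

open Matrix Real

theorem stmt_15 (n d : ℕ) (h : Fin n → EuclideanSpace ℝ (Fin d))
    (hunit : ∀ i, ‖h i‖ = 1) :
    (Matrix.of fun i j =>
        (Real.sqrt (1 - (inner ℝ (h i) (h j) : ℝ) ^ 2)
            + (inner ℝ (h i) (h j) : ℝ) * (π - Real.arccos (inner ℝ (h i) (h j) : ℝ)))
          / (2 * π)).PosSemidef := by
  obtain ⟨c, hc, hsum⟩ := exists_nonneg_hasSum_sqrt_one_sub_sq_add_mul_pi_sub_arccos
  have hρ : ∀ i j, inner ℝ (h i) (h j) ∈ Icc (-1 : ℝ) 1 := fun i j =>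
    abs_le.mp <| by simpa [hunit] using abs_real_inner_le_norm (h i) (h j)
  refine (posSemidef_gram ℝ h).map_of_hasSum (c := fun n => c n / (2 * π))
    (f := fun ρ => (√(1 - ρ ^ 2) + ρ * (π - arccos ρ)) / (2 * π))
    (fun n => div_nonneg (hc n) (by positivity)) fun i j => ?_
  simpa only [gram_apply, smul_eq_mul, div_mul_eq_mul_div] using
    (hsum _ (hρ i j)).div_const (2 * π)
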